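/- Let q be a prime, G a group, and α ∈ G an element of finite order q (orderOf α = q). Let y be an integer and Y = α^y. Suppose e, s, e′, s′ are integers such that Y^e · α^s = Y^{e′} · α^{s′} and q does not divide e − e′. Then the discrete logarithm of Y is extractable: in the field ZMod q, the residue of y equals ((s′ − s) mod q) · ((e − e′) mod q)⁻¹. -/
import Mathlib

/-- **Discrete-log extraction from two valid Schnorr-type equations (LA-HASES security
proof, forgery phase).** Let `q` be a prime, `G` a group, `α ∈ G` with `orderOf α = q`,
`y : ℤ` and `Y = α^y`. If `Y^e * α^s = Y^e' * α^s'` and `q ∤ e - e'`, then in `ZMod q`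
the residue of `y` equals `(s' - s) * (e - e')⁻¹`. -/
theorem lahases_dl_extraction {G : Type*} [Group G] (q : ℕ) [Fact (Nat.Prime q)]
    (α : G) (hα : orderOf α = q) (y e s e' s' : ℤ) (Y : G) (hY : Y = α ^ y)
    (hver : Y ^ e * α ^ s = Y ^ e' * α ^ s')
    (hne : ¬ (q : ℤ) ∣ (e - e')) :
    (y : ZMod q) = ((s' - s : ℤ) : ZMod q) * (((e - e' : ℤ) : ZMod q))⁻¹ := by
  subst hY
  rw [← zpow_mul, ← zpow_mul, ← zpow_add, ← zpow_add] at hver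
  rw [zpow_eq_zpow_iff_modEq, hα] at hver
  have h : ((y * e + s : ℤ) : ZMod q) = ((y * e' + s' : ℤ) : ZMod q) :=
    (ZMod.intCast_eq_intCast_iff' _ _ _).mpr (by exact_mod_cast hver)
  push_cast at h ⊢
  have hne' : ((e : ZMod q) - e') ≠ 0 := by
    intro h0
    apply hne
    rw [← ZMod.intCast_zmod_eq_zero_iff_dvd]
    push_cast
    exact h0
  field_simp
  linear_combination h
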